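/- arXiv:2406.09756 — 2 statements merged into one kernel-verified Lean document; each statement's English description precedes it below -/
import Mathlib

section
/- Let A, B be finite nonempty sets and s : A × B → ℝ injective. If a ∈ A is not a fixed point of f = N₁ ∘ N₂, then s(f(a), N₂(a)) > s(a, N₂(a)). Consequently f has no cycles of length greater than 1 other than fixed points: every periodic point of f is a fixed point. -/
/-- If `a` is not a fixed point of `f = N₁ ∘ N₂` then the similarity strictly
increases: `s (f a, N₂ a) > s (a, N₂ a)`. Consequently every periodic point of
`f` is a fixed point. -/
theorem stmt_6 {A B : Type*} [Fintype A] [Fintype B] [Nonempty A] [Nonempty B]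
    (s : A × B → ℝ) (hs : Function.Injective s)
    (N₂ : A → B) (hN₂ : ∀ a b, s (a, b) ≤ s (a, N₂ a))
    (N₁ : B → A) (hN₁ : ∀ b a, s (a, b) ≤ s (N₁ b, b))
    (f : A → A) (hf : f = N₁ ∘ N₂) :
    (∀ a : A, f a ≠ a → s (a, N₂ a) < s (f a, N₂ a)) ∧
    (∀ (a : A) (n : ℕ), 1 ≤ n → f^[n] a = a → f a = a) := by
  have key : ∀ a : A, f a ≠ a → s (a, N₂ a) < s (f a, N₂ a) := by
    intro a ha
    have hle : s (a, N₂ a) ≤ s (f a, N₂ a) := by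
      rw [hf]; exact hN₁ (N₂ a) a
    rcases lt_or_eq_of_le hle with h | h
    · exact h
    · exact absurd (congrArg Prod.fst (hs h)).symm ha
  refine ⟨key, ?_⟩
  set g : A → ℝ := fun a => s (a, N₂ a) with hg
  have mono : ∀ a : A, g a ≤ g (f a) := by
    intro a
    calc g a ≤ s (f a, N₂ a) := by rw [hg]; rw [hf]; exact hN₁ (N₂ a) a
    _ ≤ g (f a) := hN₂ (f a) (N₂ a)
  have iter_mono : ∀ (n : ℕ) (a : A), g a ≤ g (f^[n] a) := by
    intro n
    induction n with
    | zero => intro a; simp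
    | succ k ih =>
      intro a
      rw [Function.iterate_succ_apply]
      exact le_trans (mono a) (ih (f a))
  intro a n hn hper
  by_contra hne
  have h1 : g a < g (f a) := lt_of_lt_of_le (key a hne) (hN₂ (f a) (N₂ a))
  have h2 : g (f a) ≤ g (f^[n-1] (f a)) := iter_mono (n-1) (f a)
  have h3 : f^[n-1] (f a) = a := by
    rw [← Function.iterate_succ_apply, Nat.succ_eq_add_one, Nat.sub_add_cancel hn]
    exact hper
  rw [h3] at h2
  exact absurd (lt_of_lt_of_le h1 h2) (lt_irrefl _)
end

section
/- Consider the undirected bipartite graph G on A ⊔ B with an edge {a, N₂(a)} for each a ∈ A and an edge {b, N₁(b)} for each b ∈ B, where s : A × B → ℝ is injective and A, B finite nonempty. Then every connected component of G contains exactly one mutual nearest-neighbor pair. -/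
namespace Stmt17Aux

variable {A B : Type*}

/-- The nearest-neighbor step map. -/
def S (N₂ : A → B) (N₁ : B → A) : A ⊕ B → A ⊕ B
  | .inl a => .inr (N₂ a)
  | .inr b => .inl (N₁ b)

/-- The similarity value of a vertex's nearest-neighbor edge. -/
def V (s : A × B → ℝ) (N₂ : A → B) (N₁ : B → A) : A ⊕ B → ℝ
  | .inl a => s (a, N₂ a)
  | .inr b => s (N₁ b, b)

end Stmt17Aux

/-- In the undirected bipartite nearest-neighbor graph on `A ⊕ B` (an edge
`{a, N₂ a}` for each `a ∈ A` and `{b, N₁ b}` for each `b ∈ B`), every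
connected component contains exactly one mutual nearest-neighbor pair. -/
theorem stmt_17 {A B : Type*} [Fintype A] [Fintype B] [Nonempty A] [Nonempty B]
    (s : A × B → ℝ) (hs : Function.Injective s)
    (N₂ : A → B) (hN₂ : ∀ a b, s (a, b) ≤ s (a, N₂ a))
    (N₁ : B → A) (hN₁ : ∀ b a, s (a, b) ≤ s (N₁ b, b))
    (G : SimpleGraph (A ⊕ B))
    (hG : G = SimpleGraph.fromRel (fun x y =>
      (∃ a : A, x = Sum.inl a ∧ y = Sum.inr (N₂ a)) ∨
      (∃ b : B, x = Sum.inr b ∧ y = Sum.inl (N₁ b)))) :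
    ∀ c : G.ConnectedComponent, ∃! p : A × B,
      (N₂ p.1 = p.2 ∧ N₁ p.2 = p.1) ∧
      G.connectedComponentMk (Sum.inl p.1) = c := by
  classical
  set St := Stmt17Aux.S N₂ N₁ with hSt
  set Vl := Stmt17Aux.V s N₂ N₁ with hVl
  -- basic value monotonicity along one step
  have hle : ∀ v, Vl v ≤ Vl (St v) := by
    intro v
    cases v with
    | inl a => exact hN₁ (N₂ a) a
    | inr b => exact hN₂ (N₁ b) b
  -- equality of values forces a mutual pair
  have hmut : ∀ v, Vl v = Vl (St v) → St (St v) = v := by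
    intro v hv
    cases v with
    | inl a =>
      have : (a, N₂ a) = (N₁ (N₂ a), N₂ a) := hs hv
      have ha : N₁ (N₂ a) = a := (Prod.mk.injEq _ _ _ _ ▸ this).1.symm
      show Sum.inl (N₁ (N₂ a)) = Sum.inl a
      rw [ha]
    | inr b =>
      have : (N₁ b, b) = (N₁ b, N₂ (N₁ b)) := hs hv
      have hb : N₂ (N₁ b) = b := (Prod.mk.injEq _ _ _ _ ▸ this).2.symm
      show Sum.inr (N₂ (N₁ b)) = Sum.inr b
      rw [hb]
  -- each vertex is adjacent to its step
  have hadj : ∀ v, G.Adj v (St v) := by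
    intro v
    cases v with
    | inl a =>
      rw [hG, SimpleGraph.fromRel_adj]
      exact ⟨by simp [hSt, Stmt17Aux.S], Or.inl (Or.inl ⟨a, rfl, rfl⟩)⟩
    | inr b =>
      rw [hG, SimpleGraph.fromRel_adj]
      exact ⟨by simp [hSt, Stmt17Aux.S], Or.inl (Or.inr ⟨b, rfl, rfl⟩)⟩
  -- every edge is of the form {v, St v}
  have hedge : ∀ u w, G.Adj u w → St u = w ∨ St w = u := by
    intro u w huw
    rw [hG, SimpleGraph.fromRel_adj] at huw
    rcases huw.2 with (⟨a, h1, h2⟩ | ⟨b, h1, h2⟩) | (⟨a, h1, h2⟩ | ⟨b, h1, h2⟩)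
    · left; rw [h1, h2]; rfl
    · left; rw [h1, h2]; rfl
    · right; rw [h1, h2]; rfl
    · right; rw [h1, h2]; rfl
  -- monotone value along iteration
  have hmono : ∀ v, Monotone fun n => Vl (St^[n] v) := by
    intro v
    apply monotone_nat_of_le_succ
    intro n
    rw [Function.iterate_succ_apply']
    exact hle _
  -- iteration reaches a mutual vertex
  have hattract : ∀ v, ∃ x, St (St x) = x ∧ ∃ n, St^[n] v = x := by
    intro v
    obtain ⟨m, n, hmn, heq⟩ :=
      Finite.exists_ne_map_eq_of_infinite (fun n : ℕ => St^[n] v)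
    have key : ∀ m n : ℕ, m < n → St^[m] v = St^[n] v →
        ∃ x, St (St x) = x ∧ ∃ k, St^[k] v = x := by
      intro m n hlt he
      refine ⟨St^[m] v, ?_, m, rfl⟩
      have h1 : Vl (St^[m] v) ≤ Vl (St^[m+1] v) := hmono v (Nat.le_succ m)
      have h2 : Vl (St^[m+1] v) ≤ Vl (St^[n] v) := hmono v hlt
      have h3 : Vl (St^[m] v) = Vl (St^[m+1] v) := le_antisymm h1 (he ▸ h2)
      have h4 : Vl (St^[m] v) = Vl (St (St^[m] v)) := by
        rwa [Function.iterate_succ_apply'] at h3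
      exact hmut _ h4
    rcases lt_or_gt_of_ne hmn with h | h
    · exact key m n h heq
    · exact key n m h heq.symm
  -- orbit of a mutual vertex
  have horbit : ∀ x, St (St x) = x → ∀ k, St^[k] x = x ∨ St^[k] x = St x := by
    intro x hx k
    induction k with
    | zero => exact Or.inl rfl
    | succ k ih =>
      rw [Function.iterate_succ_apply']
      rcases ih with h | h
      · right; rw [h]
      · left; rw [h, hx]
  -- uniqueness of the attractor
  have huniq2 : ∀ v x y, St (St x) = x → St (St y) = y →
      (∃ m, St^[m] v = x) → (∃ n, St^[n] v = y) → y = x ∨ y = St x := by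
    intro v x y hx hy ⟨m, hm⟩ ⟨n, hn⟩
    rcases le_total m n with h | h
    · have : St^[n] v = St^[n - m] x := by
        rw [← hm, ← Function.iterate_add_apply, Nat.sub_add_cancel h]
      rw [hn] at this
      rcases horbit x hx (n - m) with h' | h'
      · exact Or.inl (this.trans h')
      · exact Or.inr (this.trans h')
    · have : St^[m] v = St^[m - n] y := by
        rw [← hn, ← Function.iterate_add_apply, Nat.sub_add_cancel h]
      rw [hm] at this
      rcases horbit y hy (m - n) with h' | h'
      · exact Or.inl (this ▸ h').symm
      · exact Or.inr ((congrArg St (this.trans h')).trans hy).symm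
  -- attraction is preserved along edges
  have hadj_attract : ∀ x, St (St x) = x → ∀ u w, G.Adj u w →
      (∃ n, St^[n] u = x) → (∃ n, St^[n] w = x) := by
    intro x hx u w huw ⟨n, hn⟩
    rcases hedge u w huw with h | h
    · cases n with
      | zero =>
        have hu : u = x := hn
        exact ⟨1, by simp only [Function.iterate_one]; rw [← h, hu]; exact hx⟩
      | succ n =>
        refine ⟨n, ?_⟩
        rw [← h, ← Function.iterate_succ_apply, hn]
    · exact ⟨n + 1, by rw [Function.iterate_succ_apply, h, hn]⟩
  -- attraction is preserved along reachability
  have hreach_attract : ∀ x, St (St x) = x → ∀ u w, G.Reachable u w →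
      (∃ n, St^[n] u = x) → (∃ n, St^[n] w = x) := by
    intro x hx u w hr
    obtain ⟨p⟩ := hr
    induction p with
    | nil => exact id
    | cons h p ih => exact fun hu => ih (hadj_attract x hx _ _ h hu)
  -- iteration stays in the component
  have hreach_iter : ∀ (v : A ⊕ B) (n : ℕ), G.Reachable v (St^[n] v) := by
    intro v n
    induction n with
    | zero => exact SimpleGraph.Reachable.refl v
    | succ n ih =>
      rw [Function.iterate_succ_apply']
      exact ih.trans (hadj (St^[n] v)).reachable
  -- a mutual pair gives a mutual vertex
  have hmutp : ∀ p : A × B, N₂ p.1 = p.2 → N₁ p.2 = p.1 →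
      St (St (Sum.inl p.1)) = Sum.inl p.1 := by
    intro p h2 h1
    show Sum.inl (N₁ (N₂ p.1)) = Sum.inl p.1
    rw [h2, h1]
  intro c
  -- any two mutual pairs in the component c are equal
  have hpq : ∀ p q : A × B, (N₂ p.1 = p.2 ∧ N₁ p.2 = p.1) →
      G.connectedComponentMk (Sum.inl p.1) = c →
      (N₂ q.1 = q.2 ∧ N₁ q.2 = q.1) →
      G.connectedComponentMk (Sum.inl q.1) = c → q = p := by
    intro p q hp hpc hq hqc
    have hxp := hmutp p hp.1 hp.2
    have hxq := hmutp q hq.1 hq.2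
    have hr : G.Reachable (Sum.inl p.1) (Sum.inl q.1) :=
      SimpleGraph.ConnectedComponent.exact (hpc.trans hqc.symm)
    have h1 : ∃ n, St^[n] (Sum.inl q.1 : A ⊕ B) = Sum.inl p.1 :=
      hreach_attract _ hxp _ _ hr ⟨0, rfl⟩
    have h2 : ∃ n, St^[n] (Sum.inl q.1 : A ⊕ B) = Sum.inl q.1 := ⟨0, rfl⟩
    rcases huniq2 _ _ _ hxp hxq h1 h2 with h | h
    · have h1 : q.1 = p.1 := Sum.inl_injective h
      have h2 : q.2 = p.2 := by rw [← hp.1, ← hq.1, h1]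
      exact Prod.ext h1 h2
    · exfalso
      have : (Sum.inl q.1 : A ⊕ B) = Sum.inr (N₂ p.1) := h
      simp at this
  obtain ⟨v, hvc⟩ : ∃ v, G.connectedComponentMk v = c := ⟨c.out, c.out_eq⟩
  obtain ⟨x, hx, n, hxn⟩ := hattract v
  have hxc : G.connectedComponentMk x = c := by
    rw [← hvc]
    exact (SimpleGraph.ConnectedComponent.sound (hxn ▸ hreach_iter v n)).symm
  -- extract a mutual pair from the mutual vertex x
  cases x with
  | inl a =>
    have ha : N₁ (N₂ a) = a := Sum.inl_injective hx
    refine ⟨(a, N₂ a), ⟨⟨rfl, ha⟩, hxc⟩, fun q hq => hpq _ _ ⟨rfl, ha⟩ hxc hq.1 hq.2⟩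
  | inr b =>
    have hb : N₂ (N₁ b) = b := Sum.inr_injective hx
    have hc' : G.connectedComponentMk (Sum.inl (N₁ b)) = c := by
      rw [← hxc]
      exact SimpleGraph.ConnectedComponent.sound (hadj (Sum.inr b)).reachable.symm
    refine ⟨(N₁ b, b), ⟨⟨hb, rfl⟩, hc'⟩, fun q hq => hpq _ _ ⟨hb, rfl⟩ hc' hq.1 hq.2⟩
end
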